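/- Let 𝒢 be a temporal graph with n vertices and lifetime T in which every snapshot has at least one edge, let ω ≥ 0, and let c ≥ 2 and d ≥ 1 be integers. Then there exist integers 0 = t_0 < t_1 < ⋯ < t_ℓ = T with t_i − t_{i−1} ≤ 2d for each 1 ≤ i ≤ ℓ, such that (1 − (1/c + 2/d))·q̃*_ω(𝒢) ≤ Σ_{i=1}^ℓ q̃*_{c,ω}(𝒢_{[t_{i−1}+1,t_i]}) ≤ q̃*_ω(𝒢). (This is the combinatorial core of the paper's main approximation theorem: splitting time into windows of length at most 2d and optimising over at most c parts in each window yields a (1 − (1/c + 2/d))-approximation to the non-normalised temporal modularity.) -/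

import Mathlib

open Finset
open scoped Classical

namespace TemporalModularity

noncomputable section

variable {V : Type*} [Fintype V] {P : Type*}

/-- Twice the number of edges of `G` with both endpoints in `A`
(the sum over ordered pairs of vertices of `A` of the adjacency indicator). -/
def twoE (G : SimpleGraph V) (A : Finset V) : ℝ :=
  ∑ u ∈ A, ∑ v ∈ A, if G.Adj u v then (1 : ℝ) else 0

/-- The degree of `v` in `G`, as a real number. -/
def deg (G : SimpleGraph V) (v : V) : ℝ :=
  ∑ u : V, if G.Adj v u then (1 : ℝ) else 0

/-- The number of edges of `G` (half the sum of the degrees), as a real number. -/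
def numEdges (G : SimpleGraph V) : ℝ := (∑ v : V, deg G v) / 2

/-- The volume of `A` in `G`: the sum of the degrees of the vertices of `A`. -/
def vol (G : SimpleGraph V) (A : Finset V) : ℝ := ∑ v ∈ A, deg G v

/-- The part with label `p` of the vertex partition induced by the labelling `π`. -/
def part (π : V → P) (p : P) : Finset V := univ.filter fun v => π v = p

/-- `Σ_{A ∈ 𝒜} (2 e_G(A) − vol_G(A)² / (2m))`, where `𝒜` is the partition of the
vertices induced by the labelling `π` (empty parts contribute zero). -/
def snapTerm (G : SimpleGraph V) (π : V → P) : ℝ :=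
  ∑ p ∈ univ.image π,
    (twoE G (part π p) - vol G (part π p) ^ 2 / (2 * numEdges G))

/-- The static modularity `q(G,𝒜) = Σ_{A ∈ 𝒜} (e(A)/m − vol(A)²/(4m²))` of the
partition induced by the labelling `π`. -/
def staticQ (G : SimpleGraph V) (π : V → P) : ℝ :=
  ∑ p ∈ univ.image π,
    (twoE G (part π p) / (2 * numEdges G) -
      vol G (part π p) ^ 2 / (4 * numEdges G ^ 2))

/-- The maximum static modularity `q*(G)` over all vertex partitions (every partition
of `V` is induced by some labelling `V → V`). -/
def staticQStar (G : SimpleGraph V) : ℝ := ⨆ π : V → V, staticQ G π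

/-- The loyalty contribution `L(𝒜)` of the temporal partition `π` with lifetime `T`. -/
def loyalty (T : ℕ) (π : V → ℕ → P) : ℝ :=
  ∑ v : V, ∑ t ∈ Icc 1 (T - 1), if π v t = π v (t + 1) then (1 : ℝ) else 0

/-- The per-time loyalty `L(𝒜,t)` of the temporal partition `π`. -/
def loyaltyAt (π : V → ℕ → P) (t : ℕ) : ℝ :=
  ∑ v : V, if π v t = π v (t + 1) then (1 : ℝ) else 0

/-- The normalisation factor `μ_ω(𝒢) = ω n (T−1)/2 + Σ_t m_t`. -/
def mu (G : ℕ → SimpleGraph V) (T : ℕ) (ω : ℝ) : ℝ :=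
  ω * (Fintype.card V) * ((T : ℝ) - 1) / 2 + ∑ t ∈ Icc 1 T, numEdges (G t)

/-- The non-normalised temporal modularity of the restriction of the temporal graph
`G` to the time interval `[a,b]`, for the partition `π`. -/
def qTildeI (G : ℕ → SimpleGraph V) (a b : ℕ) (ω : ℝ) (π : V → ℕ → P) : ℝ :=
  (∑ t ∈ Icc a b, snapTerm (G t) fun v => π v t) +
    ω * ∑ v : V, ∑ t ∈ Icc a (b - 1), if π v t = π v (t + 1) then (1 : ℝ) else 0

/-- The non-normalised temporal modularity `q̃_ω(𝒢,𝒜)` of the partition `π` of the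
temporal graph `G` with lifetime `T`. -/
def qTilde (G : ℕ → SimpleGraph V) (T : ℕ) (ω : ℝ) (π : V → ℕ → P) : ℝ :=
  qTildeI G 1 T ω π

/-- The temporal modularity `q_ω(𝒢,𝒜)` of the partition `π` of the temporal graph `G`
with lifetime `T`. -/
def qTemp (G : ℕ → SimpleGraph V) (T : ℕ) (ω : ℝ) (π : V → ℕ → P) : ℝ :=
  qTilde G T ω π / (2 * mu G T ω)

/-- The temporal modularity `q*_ω(𝒢)`: the maximum of `q_ω(𝒢,𝒜)` over all partitions
(every partition of `V × [T]` is induced by some labelling into `ℕ`). -/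
def qTempStar (G : ℕ → SimpleGraph V) (T : ℕ) (ω : ℝ) : ℝ :=
  ⨆ π : V → ℕ → ℕ, qTemp G T ω π

/-- The temporal `k`-modularity `q*_{k,ω}(𝒢)`: the maximum of `q_ω(𝒢,𝒜)` over all
partitions into at most `k` parts. -/
def qTempStarK (G : ℕ → SimpleGraph V) (T : ℕ) (ω : ℝ) (k : ℕ) : ℝ :=
  ⨆ π : V → ℕ → Fin k, qTemp G T ω π

/-- The maximum non-normalised temporal modularity of the restriction of `G` to the
time interval `[a,b]`, over all partitions. -/
def qTildeStarI (G : ℕ → SimpleGraph V) (a b : ℕ) (ω : ℝ) : ℝ :=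
  ⨆ π : V → ℕ → ℕ, qTildeI G a b ω π

/-- The non-normalised temporal modularity `q̃*_ω(𝒢)` of the temporal graph `G` with
lifetime `T`. -/
def qTildeStar (G : ℕ → SimpleGraph V) (T : ℕ) (ω : ℝ) : ℝ := qTildeStarI G 1 T ω

/-- The maximum non-normalised temporal modularity of the restriction of `G` to `[a,b]`
over partitions into at most `c` parts. -/
def qTildeStarKI (G : ℕ → SimpleGraph V) (a b : ℕ) (ω : ℝ) (c : ℕ) : ℝ :=
  ⨆ π : V → ℕ → Fin c, qTildeI G a b ω π

/-- The non-normalised temporal `c`-modularity `q̃*_{c,ω}(𝒢)`. -/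
def qTildeStarK (G : ℕ → SimpleGraph V) (T : ℕ) (ω : ℝ) (c : ℕ) : ℝ :=
  qTildeStarKI G 1 T ω c

end

/-!
Cut `[1, T]` into `⌈T / 2d⌉` consecutive windows of length at most `2d`.

Upper bound: any `c`-partitions of the windows, glued with labels made disjoint across windows,
form one partition of the whole temporal graph whose value is their sum plus the (nonnegative)
loyalty across window boundaries.

Lower bound: given any partition, recolouring the finitely many labels it uses in a window
uniformly at random with `c` colours keeps a `1 − 1/c` fraction of each snapshot's modularity in
expectation and never decreases loyalty, so some recolouring does at least that well. Cutting at
the window boundaries loses at most `ω n` per boundary, in total at most `ω n (T − 1) / 2d`, and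
`ω n (T − 1)` is already the value of the partition with a single part.
-/

section Snapshot

variable {V : Type*} [Fintype V]

/-- The entry `A_uv − d_u d_v / 2m` of the modularity matrix of `G`. -/
noncomputable def modularityWeight (G : SimpleGraph V) (u v : V) : ℝ :=
  (if G.Adj u v then 1 else 0) - deg G u * deg G v / (2 * numEdges G)

lemma deg_nonneg (G : SimpleGraph V) (v : V) : 0 ≤ deg G v := by
  unfold deg; positivity

lemma numEdges_nonneg (G : SimpleGraph V) : 0 ≤ numEdges G := by
  unfold numEdges
  have := Finset.sum_nonneg fun v (_ : v ∈ univ) => deg_nonneg G v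
  positivity

lemma modularityWeight_le_one (G : SimpleGraph V) (u v : V) : modularityWeight G u v ≤ 1 := by
  have := deg_nonneg G u; have := deg_nonneg G v; have := numEdges_nonneg G
  have : 0 ≤ deg G u * deg G v / (2 * numEdges G) := by positivity
  unfold modularityWeight; split_ifs <;> linarith

lemma sum_sum_modularityWeight (G : SimpleGraph V) :
    ∑ u, ∑ v, modularityWeight G u v = 0 := by
  have hdeg : ∑ v, deg G v = 2 * numEdges G := by unfold numEdges; ring
  have hadj : ∑ u : V, ∑ v : V, (if G.Adj u v then (1 : ℝ) else 0) = 2 * numEdges G := hdeg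
  simp only [modularityWeight, Finset.sum_sub_distrib, hadj, ← Finset.sum_div,
    ← Finset.mul_sum, ← Finset.sum_mul, hdeg]
  field_simp
  ring

lemma snapTerm_eq_sum_modularityWeight {P : Type*} [DecidableEq P] (G : SimpleGraph V)
    (π : V → P) :
    snapTerm G π = ∑ u, ∑ v, modularityWeight G u v * if π u = π v then 1 else 0 := by
  have hpart : ∀ p, twoE G (part π p) - vol G (part π p) ^ 2 / (2 * numEdges G) =
      ∑ u ∈ part π p, ∑ v ∈ part π p, modularityWeight G u v := by
    intro p
    simp only [twoE, vol, modularityWeight, sq, Finset.sum_mul_sum, Finset.sum_div,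
      Finset.sum_sub_distrib]
  unfold snapTerm
  rw [Finset.sum_congr rfl fun p _ => hpart p]
  trans ∑ u, ∑ v ∈ part π (π u), modularityWeight G u v
  · rw [← Finset.sum_fiberwise_of_maps_to (fun u _ => Finset.mem_image_of_mem π (mem_univ u))]
    refine Finset.sum_congr (by ext; simp) fun p _ =>
      Finset.sum_congr (by ext; simp [part]) fun u hu => ?_
    rw [(Finset.mem_filter.mp hu).2]
  · refine Finset.sum_congr rfl fun u _ => ?_
    rw [part, Finset.sum_filter]
    refine Finset.sum_congr rfl fun v _ => ?_
    split_ifs <;> simp_all [eq_comm]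

lemma snapTerm_congr {P Q : Type*} (G : SimpleGraph V) {σ : V → P} {τ : V → Q}
    (h : ∀ u v, σ u = σ v ↔ τ u = τ v) : snapTerm G σ = snapTerm G τ := by
  simp only [snapTerm_eq_sum_modularityWeight, h]

lemma snapTerm_le_card_sq {P : Type*} (G : SimpleGraph V) (π : V → P) :
    snapTerm G π ≤ (Fintype.card V : ℝ) ^ 2 := by
  rw [snapTerm_eq_sum_modularityWeight]
  calc _ ≤ ∑ _u : V, ∑ _v : V, (1 : ℝ) := by
        gcongr with u _ v _
        have := modularityWeight_le_one G u v
        split_ifs <;> linarith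
    _ = _ := by simp [sq]

lemma snapTerm_const (G : SimpleGraph V) {P : Type*} (p : P) :
    snapTerm G (fun _ => p) = 0 := by
  simp [snapTerm_eq_sum_modularityWeight, sum_sum_modularityWeight G]

end Snapshot

section Colouring

variable {X : Type*} [Fintype X] [DecidableEq X] {c : ℕ} [NeZero c]

/-- Shifting the colour of `y` by `k` is a bijection of colourings, so every difference
`g x - g y` is taken by the same number of colourings. -/
lemma natCast_mul_sum_apply_eq_apply {x y : X} (hxy : x ≠ y) :
    (c : ℝ) * ∑ g : X → Fin c, (if g x = g y then 1 else 0) = Fintype.card (X → Fin c) := by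
  have hshift : ∀ k : Fin c, ∑ g : X → Fin c, (if g x = g y + k then (1 : ℝ) else 0) =
      ∑ g : X → Fin c, if g x = g y then 1 else 0 := by
    intro k
    conv_rhs => rw [← Equiv.sum_comp (Equiv.addRight (Pi.single y k))]
    simp [hxy]
  calc (c : ℝ) * ∑ g : X → Fin c, (if g x = g y then 1 else 0)
      = ∑ k : Fin c, ∑ g : X → Fin c, if g x = g y + k then (1 : ℝ) else 0 := by
        simp [hshift]
    _ = ∑ g : X → Fin c, ∑ k : Fin c, if g x - g y = k then (1 : ℝ) else 0 := by
        rw [Finset.sum_comm]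
        simp only [sub_eq_iff_eq_add']
    _ = _ := by simp

lemma sum_apply_eq_apply (x y : X) :
    ∑ g : X → Fin c, (if g x = g y then (1 : ℝ) else 0) =
      (Fintype.card (X → Fin c) : ℝ) * if x = y then 1 else 1 / (c : ℝ) := by
  have hc : (c : ℝ) ≠ 0 := Nat.cast_ne_zero.mpr (NeZero.ne c)
  by_cases hxy : x = y
  · simp [hxy]
  · rw [if_neg hxy, ← natCast_mul_sum_apply_eq_apply hxy]
    field_simp

variable {V : Type*} [Fintype V]

/-- A pair in the same part stays together, any other pair is merged by `1/c` of the
colourings, and the modularity matrix has zero sum. -/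
lemma sum_snapTerm_comp (G : SimpleGraph V) (σ : V → X) :
    ∑ g : X → Fin c, snapTerm G (fun v => g (σ v)) =
      (Fintype.card (X → Fin c) : ℝ) * ((1 - 1 / (c : ℝ)) * snapTerm G σ) := by
  have hpair : ∀ u v, modularityWeight G u v *
      ((Fintype.card (X → Fin c) : ℝ) * if σ u = σ v then 1 else 1 / (c : ℝ)) =
      Fintype.card (X → Fin c) * (1 - 1 / c) *
          (modularityWeight G u v * if σ u = σ v then 1 else 0) +
        Fintype.card (X → Fin c) / c * modularityWeight G u v := by
    intro u v; split_ifs <;> ring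
  simp only [snapTerm_eq_sum_modularityWeight]
  rw [Finset.sum_comm]
  simp only [Finset.sum_comm (γ := X → Fin c) (s := univ) (t := univ), ← Finset.mul_sum,
    sum_apply_eq_apply, hpair, Finset.sum_add_distrib, sum_sum_modularityWeight]
  ring

end Colouring

section Temporal

variable {V : Type*} [Fintype V] {P Q : Type*} (G : ℕ → SimpleGraph V) {ω : ℝ}

lemma qTildeI_eq (a b : ℕ) (π : V → ℕ → P) :
    qTildeI G a b ω π = ∑ s ∈ Icc a b, snapTerm (G s) (fun v => π v s) +
      ω * ∑ s ∈ Icc a (b - 1), loyaltyAt π s := by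
  unfold qTildeI loyaltyAt
  rw [Finset.sum_comm]

lemma loyaltyAt_nonneg (π : V → ℕ → P) (s : ℕ) : 0 ≤ loyaltyAt π s := by
  unfold loyaltyAt; positivity

lemma loyaltyAt_le_card (π : V → ℕ → P) (s : ℕ) : loyaltyAt π s ≤ Fintype.card V := by
  unfold loyaltyAt
  calc _ ≤ ∑ _v : V, (1 : ℝ) := by gcongr; split_ifs <;> norm_num
    _ = _ := by simp

lemma loyaltyAt_le_loyaltyAt_comp (π : V → ℕ → P) (g : P → Q) (s : ℕ) :
    loyaltyAt π s ≤ loyaltyAt (fun v t => g (π v t)) s := by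
  unfold loyaltyAt
  gcongr with v
  split_ifs with h h' <;> simp_all

lemma qTildeI_congr {a b : ℕ} {π : V → ℕ → P} {ρ : V → ℕ → Q}
    (hsnap : ∀ s ∈ Icc a b, ∀ u v, π u s = π v s ↔ ρ u s = ρ v s)
    (hloy : ∀ s ∈ Icc a (b - 1), ∀ v, π v s = π v (s + 1) ↔ ρ v s = ρ v (s + 1)) :
    qTildeI G a b ω π = qTildeI G a b ω ρ := by
  unfold qTildeI
  congr 1
  · exact Finset.sum_congr rfl fun s hs => snapTerm_congr _ (hsnap s hs)
  · simp +contextual only [hloy]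

lemma qTildeI_le (a b : ℕ) (hω : 0 ≤ ω) (π : V → ℕ → P) :
    qTildeI G a b ω π ≤ #(Icc a b) * (Fintype.card V : ℝ) ^ 2 +
      ω * (#(Icc a (b - 1)) * Fintype.card V) := by
  rw [qTildeI_eq]
  gcongr
  · exact (Finset.sum_le_card_nsmul _ _ _ fun s _ => snapTerm_le_card_sq _ _).trans_eq
      (nsmul_eq_mul _ _)
  · exact (Finset.sum_le_card_nsmul _ _ _ fun s _ => loyaltyAt_le_card _ _).trans_eq
      (nsmul_eq_mul _ _)

lemma bddAbove_range_qTildeI (a b : ℕ) (hω : 0 ≤ ω) :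
    BddAbove (Set.range fun π : V → ℕ → P => qTildeI G a b ω π) :=
  ⟨_, Set.forall_mem_range.mpr (qTildeI_le G a b hω)⟩

lemma qTildeI_le_qTildeStarI [Countable P] (a b : ℕ) (hω : 0 ≤ ω) (π : V → ℕ → P) :
    qTildeI G a b ω π ≤ qTildeStarI G a b ω := by
  obtain ⟨ι, hι⟩ := Countable.exists_injective_nat P
  calc qTildeI G a b ω π = qTildeI G a b ω (fun v s => ι (π v s)) :=
        qTildeI_congr G (fun _ _ _ _ => hι.eq_iff.symm) (fun _ _ _ => hι.eq_iff.symm)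
    _ ≤ qTildeStarI G a b ω := le_ciSup (bddAbove_range_qTildeI G a b hω) _

lemma mul_card_mul_pred_le_qTildeStar (T : ℕ) (hω : 0 ≤ ω) :
    ω * (Fintype.card V * (T - 1 : ℕ)) ≤ qTildeStar G T ω := by
  have hconst :
      qTildeI G 1 T ω (fun _ _ => (0 : ℕ)) = ω * (Fintype.card V * (T - 1 : ℕ)) := by
    simp [qTildeI_eq, snapTerm_const, loyaltyAt, mul_comm]
  exact hconst ▸ qTildeI_le_qTildeStarI G 1 T hω _

end Temporal

section Recolouring

variable {V : Type*} [Fintype V] {P : Type*} (G : ℕ → SimpleGraph V) {ω : ℝ}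
  {c : ℕ} [NeZero c]

noncomputable def extendColouring (S : Finset P) (g : S → Fin c) (p : P) : Fin c :=
  if h : p ∈ S then g ⟨p, h⟩ else 0

lemma sum_snapTerm_extendColouring {S : Finset P} {σ : V → P} (hσ : ∀ v, σ v ∈ S)
    (H : SimpleGraph V) :
    ∑ g : S → Fin c, snapTerm H (fun v => extendColouring S g (σ v)) =
      Fintype.card (S → Fin c) * ((1 - 1 / (c : ℝ)) * snapTerm H σ) := by
  have hsub : snapTerm H (fun v => (⟨σ v, hσ v⟩ : S)) = snapTerm H σ :=
    snapTerm_congr _ fun _ _ => Subtype.ext_iff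
  simp only [extendColouring, dif_pos (hσ _)]
  rw [sum_snapTerm_comp H (fun v => (⟨σ v, hσ v⟩ : S)), hsub]

lemma sum_qTildeI_extendColouring_ge {a b : ℕ} (hω : 0 ≤ ω) {S : Finset P}
    {π : V → ℕ → P}
    (hS : ∀ v, ∀ s ∈ Icc a b, π v s ∈ S) :
    ∑ _g : S → Fin c, (1 - 1 / (c : ℝ)) * qTildeI G a b ω π ≤
      ∑ g : S → Fin c, qTildeI G a b ω (fun v s => extendColouring S g (π v s)) := by
  set K : ℝ := (Fintype.card (S → Fin c) : ℝ)
  have hloy : ∀ g : S → Fin c, ∑ s ∈ Icc a (b - 1), loyaltyAt π s ≤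
      ∑ s ∈ Icc a (b - 1), loyaltyAt (fun v t => extendColouring S g (π v t)) s := fun g =>
    Finset.sum_le_sum fun s _ => loyaltyAt_le_loyaltyAt_comp π (extendColouring S g) s
  have hloy_nonneg : 0 ≤ ω * ∑ s ∈ Icc a (b - 1), loyaltyAt π s :=
    mul_nonneg hω (Finset.sum_nonneg fun s _ => loyaltyAt_nonneg π s)
  calc _ = K * ((1 - 1 / (c : ℝ)) * ∑ s ∈ Icc a b, snapTerm (G s) (fun v => π v s)) +
          K * ((1 - 1 / (c : ℝ)) * (ω * ∑ s ∈ Icc a (b - 1), loyaltyAt π s)) := by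
        rw [Finset.sum_const, card_univ, nsmul_eq_mul, qTildeI_eq]; ring
    _ ≤ K * ((1 - 1 / (c : ℝ)) * ∑ s ∈ Icc a b, snapTerm (G s) (fun v => π v s)) +
          K * (ω * ∑ s ∈ Icc a (b - 1), loyaltyAt π s) := by
        gcongr _ + K * ?_
        exact mul_le_of_le_one_left hloy_nonneg (sub_le_self _ (by positivity))
    _ ≤ ∑ g : S → Fin c,
          (∑ s ∈ Icc a b, snapTerm (G s) (fun v => extendColouring S g (π v s)) +
          ω * ∑ s ∈ Icc a (b - 1), loyaltyAt (fun v t => extendColouring S g (π v t)) s) := by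
        rw [Finset.sum_add_distrib, Finset.sum_comm,
          Finset.sum_congr rfl fun s hs =>
            sum_snapTerm_extendColouring (fun v => hS v s hs) (G s),
          ← Finset.mul_sum, ← Finset.mul_sum]
        gcongr
        calc K * (ω * ∑ s ∈ Icc a (b - 1), loyaltyAt π s)
            = ∑ _g : S → Fin c, ω * ∑ s ∈ Icc a (b - 1), loyaltyAt π s := by
              rw [Finset.sum_const, card_univ, nsmul_eq_mul]
          _ ≤ _ := Finset.sum_le_sum fun g _ => mul_le_mul_of_nonneg_left (hloy g) hω
    _ = _ := Finset.sum_congr rfl fun g _ => (qTildeI_eq G a b _).symm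

theorem exists_recolouring_ge (a b : ℕ) (hω : 0 ≤ ω) (π : V → ℕ → P) :
    ∃ g : P → Fin c, (1 - 1 / (c : ℝ)) * qTildeI G a b ω π ≤
      qTildeI G a b ω (fun v s => g (π v s)) := by
  have hS : ∀ v, ∀ s ∈ Icc a b,
      π v s ∈ (univ ×ˢ Icc a b).image fun x : V × ℕ => π x.1 x.2 := fun v s hs =>
    Finset.mem_image.mpr ⟨(v, s), Finset.mem_product.mpr ⟨mem_univ v, hs⟩, rfl⟩
  obtain ⟨g, -, hg⟩ :=
    Finset.exists_le_of_sum_le univ_nonempty (sum_qTildeI_extendColouring_ge (c := c) G hω hS)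
  exact ⟨extendColouring _ g, hg⟩

end Recolouring

section Windows

lemma sum_Ioc_eq_sum_range_sum_Ioc {M : Type*} [AddCommMonoid M] {t : ℕ → ℕ} (ht : Monotone t)
    (f : ℕ → M) (L : ℕ) :
    ∑ s ∈ Ioc (t 0) (t L), f s = ∑ i ∈ range L, ∑ s ∈ Ioc (t i) (t (i + 1)), f s := by
  induction L with
  | zero => simp
  | succ L ih =>
    rw [Finset.sum_range_succ, ← ih,
      Finset.sum_Ioc_consecutive f (ht (Nat.zero_le L)) (ht (Nat.le_succ L))]

lemma sum_Ico_eq_sum_range_add_sum_Ico {M : Type*} [AddCommMonoid M] {t : ℕ → ℕ} {L : ℕ}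
    (ht : Monotone t) (hlt : ∀ i < L, t i < t (i + 1)) (f : ℕ → M) :
    ∑ s ∈ Ico (t 0) (t L), f s =
      ∑ i ∈ range L, (f (t i) + ∑ s ∈ Ico (t i + 1) (t (i + 1)), f s) := by
  induction L with
  | zero => simp
  | succ L ih =>
    rw [Finset.sum_range_succ, ← ih fun i hi => hlt i (by omega),
      ← Finset.sum_eq_sum_Ico_succ_bot (hlt L (by omega)),
      Finset.sum_Ico_consecutive f (ht (Nat.zero_le L)) (ht (Nat.le_succ L))]

/-- Windows of length `D` cover `[1, T]`, the `i`-th one being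
`(windowEnd D T i, windowEnd D T (i + 1)]`. -/
def windowEnd (D T i : ℕ) : ℕ := min (D * i) T

/-- The number `⌈T / D⌉` of windows, for `T ≥ 1`. -/
def numWindows (D T : ℕ) : ℕ := (T - 1) / D + 1

variable {D T : ℕ}

lemma windowEnd_zero : windowEnd D T 0 = 0 := by simp [windowEnd]

lemma windowEnd_monotone : Monotone (windowEnd D T) := fun _ _ h =>
  min_le_min_right T (Nat.mul_le_mul_left D h)

lemma mul_pred_numWindows_le : D * (numWindows D T - 1) ≤ T - 1 := by
  simpa [numWindows] using Nat.mul_div_le (T - 1) D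

lemma windowEnd_numWindows (hD : 0 < D) : windowEnd D T (numWindows D T) = T := by
  have := Nat.lt_mul_div_succ (T - 1) hD
  simp only [windowEnd, numWindows]
  omega

lemma windowEnd_lt_succ (hD : 0 < D) (hT : 0 < T) {i : ℕ} (hi : i < numWindows D T) :
    windowEnd D T i < windowEnd D T (i + 1) := by
  have : D * i ≤ D * (numWindows D T - 1) := Nat.mul_le_mul_left D (by omega)
  have := mul_pred_numWindows_le (D := D) (T := T)
  simp only [windowEnd, Nat.mul_succ]
  omega

lemma windowEnd_succ_sub_le (i : ℕ) : windowEnd D T (i + 1) - windowEnd D T i ≤ D := by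
  simp only [windowEnd, Nat.mul_succ]
  omega

lemma pred_div_eq_of_mem_window {i s : ℕ} (h₁ : windowEnd D T i < s)
    (h₂ : s ≤ windowEnd D T (i + 1)) : (s - 1) / D = i := by
  simp only [windowEnd, Nat.mul_succ] at h₁ h₂
  exact Nat.div_eq_of_lt_le (by rw [Nat.mul_comm]; omega)
    (by rw [Nat.mul_comm, Nat.mul_succ]; omega)

end Windows

lemma sum_ciSup_le {ι κ : Type*} [Nonempty κ] {s : Finset ι} {f : ι → κ → ℝ} {B : ℝ}
    (h : ∀ ρ : ι → κ, ∑ i ∈ s, f i (ρ i) ≤ B) :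
    ∑ i ∈ s, ⨆ k, f i k ≤ B := by
  induction s using Finset.induction_on generalizing B with
  | empty => simpa using h fun _ => Classical.arbitrary κ
  | insert j s hj ih =>
    rw [Finset.sum_insert hj, ← le_sub_iff_add_le']
    refine ih fun ρ => le_sub_comm.mp (ciSup_le fun k => le_sub_iff_add_le.mpr ?_)
    have hρ : ∑ i ∈ s, f i (Function.update ρ j k i) = ∑ i ∈ s, f i (ρ i) :=
      Finset.sum_congr rfl fun i hi => by
        rw [Function.update_of_ne (ne_of_mem_of_not_mem hi hj)]
    simpa [Finset.sum_insert hj, hρ] using h (Function.update ρ j k)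

section Approximation

variable {V : Type*} [Fintype V] {P : Type*} (G : ℕ → SimpleGraph V) {ω : ℝ} {D T : ℕ}

lemma qTildeI_eq_sum_windows {t : ℕ → ℕ} {L : ℕ} (ht : Monotone t)
    (hlt : ∀ i < L, t i < t (i + 1)) (ht₀ : t 0 = 0) (htL : t L = T) (hT : 0 < T)
    (π : V → ℕ → P) :
    qTildeI G 1 T ω π = ∑ i ∈ range L, qTildeI G (t i + 1) (t (i + 1)) ω π +
      ω * ∑ i ∈ range (L - 1), loyaltyAt π (t (i + 1)) := by
  obtain ⟨L, rfl⟩ : ∃ k, L = k + 1 := Nat.exists_eq_add_one.mpr (Nat.pos_of_ne_zero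
    (by rintro rfl; omega))
  have hsnap : ∑ s ∈ Icc 1 T, snapTerm (G s) (fun v => π v s) =
      ∑ i ∈ range (L + 1),
        ∑ s ∈ Icc (t i + 1) (t (i + 1)), snapTerm (G s) (fun v => π v s) := by
    simp only [Finset.Icc_add_one_left_eq_Ioc]
    rw [← sum_Ioc_eq_sum_range_sum_Ioc ht, ht₀, htL]
    rfl
  have hloy : ∑ s ∈ Icc 1 (T - 1), loyaltyAt π s =
      ∑ i ∈ range (L + 1), ∑ s ∈ Icc (t i + 1) (t (i + 1) - 1), loyaltyAt π s +
        ∑ i ∈ range L, loyaltyAt π (t (i + 1)) := by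
    have hIco := sum_Ico_eq_sum_range_add_sum_Ico ht hlt (loyaltyAt π)
    have hwin : ∀ i ∈ range (L + 1), ∑ s ∈ Ico (t i + 1) (t (i + 1)), loyaltyAt π s =
        ∑ s ∈ Icc (t i + 1) (t (i + 1) - 1), loyaltyAt π s := fun i hi => by
      have := hlt i (mem_range.mp hi)
      congr 1; ext; simp only [mem_Ico, mem_Icc]; omega
    rw [ht₀, htL, Finset.sum_eq_sum_Ico_succ_bot hT, Finset.sum_add_distrib,
      Finset.sum_range_succ' (fun i => loyaltyAt π (t i)), ht₀, zero_add,
      Finset.sum_congr rfl hwin] at hIco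
    rw [show Icc 1 (T - 1) = Ico 1 T by ext; simp only [mem_Ico, mem_Icc]; omega]
    linarith
  rw [qTildeI_eq, hsnap, hloy]
  simp only [qTildeI_eq, Finset.sum_add_distrib, mul_add, Finset.mul_sum, Nat.add_sub_cancel]
  ring

theorem sum_qTildeStarKI_le_qTildeStar {c : ℕ} [NeZero c] (hD : 0 < D) (hT : 0 < T)
    (hω : 0 ≤ ω) :
    ∑ i ∈ range (numWindows D T),
        qTildeStarKI G (windowEnd D T i + 1) (windowEnd D T (i + 1)) ω c ≤
      qTildeStar G T ω := by
  refine sum_ciSup_le fun ρ => ?_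
  let π : V → ℕ → ℕ × Fin c := fun v s => ((s - 1) / D, ρ ((s - 1) / D) v s)
  have hwin : ∀ i ∈ range (numWindows D T),
      qTildeI G (windowEnd D T i + 1) (windowEnd D T (i + 1)) ω (ρ i) =
        qTildeI G (windowEnd D T i + 1) (windowEnd D T (i + 1)) ω π := by
    intro i _
    have hidx : ∀ s ∈ Icc (windowEnd D T i + 1) (windowEnd D T (i + 1)), (s - 1) / D = i :=
      fun s hs => pred_div_eq_of_mem_window (by grind) (mem_Icc.mp hs).2
    refine qTildeI_congr G (fun s hs u v => by simp [π, hidx s hs]) fun s hs v => ?_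
    have hs₀ : s ∈ Icc (windowEnd D T i + 1) (windowEnd D T (i + 1)) := by grind
    have hs₁ : s + 1 ∈ Icc (windowEnd D T i + 1) (windowEnd D T (i + 1)) := by grind
    have hs₁' : s / D = i := by simpa using hidx (s + 1) hs₁
    simp [π, hidx s hs₀, hs₁']
  calc _ = ∑ i ∈ range (numWindows D T),
          qTildeI G (windowEnd D T i + 1) (windowEnd D T (i + 1)) ω π :=
        Finset.sum_congr rfl hwin
    _ ≤ qTildeI G 1 T ω π := by
        rw [qTildeI_eq_sum_windows G windowEnd_monotone (fun i => windowEnd_lt_succ hD hT)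
          windowEnd_zero (windowEnd_numWindows hD) hT]
        exact le_add_of_nonneg_right
          (mul_nonneg hω (Finset.sum_nonneg fun _ _ => loyaltyAt_nonneg _ _))
    _ ≤ qTildeStar G T ω := qTildeI_le_qTildeStarI G 1 T hω π

theorem one_sub_inv_mul_qTildeStar_le {c : ℕ} [NeZero c] {t : ℕ → ℕ} {L : ℕ}
    (ht : Monotone t) (hlt : ∀ i < L, t i < t (i + 1)) (ht₀ : t 0 = 0) (htL : t L = T)
    (hT : 0 < T) (hω : 0 ≤ ω) :
    (1 - 1 / (c : ℝ)) * qTildeStar G T ω ≤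
      ∑ i ∈ range L, qTildeStarKI G (t i + 1) (t (i + 1)) ω c +
        ω * (Fintype.card V * (L - 1 : ℕ)) := by
  have hc : 1 - 1 / (c : ℝ) ≤ 1 := sub_le_self _ (by positivity)
  have hc₀ : 0 ≤ 1 - 1 / (c : ℝ) :=
    sub_nonneg.mpr (div_le_one_of_le₀ (by exact_mod_cast NeZero.one_le) (by positivity))
  rw [qTildeStar, qTildeStarI, Real.mul_iSup_of_nonneg hc₀]
  refine ciSup_le fun π => ?_
  rw [qTildeI_eq_sum_windows G ht hlt ht₀ htL hT, mul_add, Finset.mul_sum]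
  refine add_le_add (Finset.sum_le_sum fun i _ => ?_) ?_
  · obtain ⟨g, hg⟩ := exists_recolouring_ge (c := c) G (t i + 1) (t (i + 1)) hω π
    exact hg.trans (le_ciSup (bddAbove_range_qTildeI G _ _ hω) _)
  · have hloy : 0 ≤ ω * ∑ i ∈ range (L - 1), loyaltyAt π (t (i + 1)) :=
      mul_nonneg hω (Finset.sum_nonneg fun _ _ => loyaltyAt_nonneg _ _)
    refine (mul_le_of_le_one_left hloy hc).trans (mul_le_mul_of_nonneg_left ?_ hω)
    refine (Finset.sum_le_card_nsmul (range _) _ _ fun i _ =>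
      loyaltyAt_le_card π (t (i + 1))).trans_eq ?_
    simp [mul_comm]

lemma mul_boundaryLoss_le_qTildeStar (hω : 0 ≤ ω) :
    (D : ℝ) * (ω * (Fintype.card V * (numWindows D T - 1 : ℕ))) ≤ qTildeStar G T ω := calc
  _ = ω * (Fintype.card V * (D * (numWindows D T - 1) : ℕ)) := by push_cast; ring
  _ ≤ ω * (Fintype.card V * (T - 1 : ℕ)) := by gcongr; exact mul_pred_numWindows_le
  _ ≤ qTildeStar G T ω := mul_card_mul_pred_le_qTildeStar G T hω

end Approximation

theorem qTildeStar_window_c_approximation_general {V : Type*} [Fintype V]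
    (T : ℕ) (hT : 1 ≤ T) (G : ℕ → SimpleGraph V)
    (ω : ℝ) (hω : 0 ≤ ω) (c d : ℕ) (hc : 2 ≤ c) (hd : 1 ≤ d) :
    ∃ (ℓ : ℕ) (t : ℕ → ℕ), 1 ≤ ℓ ∧ t 0 = 0 ∧ t ℓ = T ∧
      (∀ i < ℓ, t i < t (i + 1) ∧ t (i + 1) - t i ≤ 2 * d) ∧
      (1 - (1 / (c : ℝ) + 2 / (d : ℝ))) * qTildeStar G T ω ≤
        ∑ i ∈ Finset.range ℓ, qTildeStarKI G (t i + 1) (t (i + 1)) ω c ∧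
      ∑ i ∈ Finset.range ℓ, qTildeStarKI G (t i + 1) (t (i + 1)) ω c ≤
        qTildeStar G T ω := by
  have : NeZero c := ⟨by omega⟩
  have hD : 0 < 2 * d := by omega
  refine ⟨numWindows (2 * d) T, windowEnd (2 * d) T, by simp [numWindows], windowEnd_zero,
    windowEnd_numWindows hD, fun i hi => ⟨windowEnd_lt_succ hD hT hi, windowEnd_succ_sub_le i⟩,
    ?_, sum_qTildeStarKI_le_qTildeStar G hD hT hω⟩
  have happrox := one_sub_inv_mul_qTildeStar_le (c := c) G windowEnd_monotone
    (fun i => windowEnd_lt_succ hD hT) windowEnd_zero (windowEnd_numWindows hD) hT hω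
  have hloss := mul_boundaryLoss_le_qTildeStar G (D := 2 * d) (T := T) hω
  set x := ω * (Fintype.card V * (numWindows (2 * d) T - 1 : ℕ))
  have hx₀ : 0 ≤ x := by positivity
  have hd₀ : (0 : ℝ) < d := by exact_mod_cast hd
  have hx : x ≤ 2 / d * qTildeStar G T ω := by
    rw [div_mul_eq_mul_div, le_div_iff₀ hd₀]
    push_cast at hloss
    nlinarith
  linarith

/-- For any integers `c ≥ 2` and `d ≥ 1` there exist
`0 = t_0 < t_1 < ⋯ < t_ℓ = T` with `t_i − t_{i−1} ≤ 2d` for each `i`, such that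
`(1 − (1/c + 2/d))·q̃*_ω(𝒢) ≤ Σ_{i=1}^ℓ q̃*_{c,ω}(𝒢_{[t_{i−1}+1,t_i]}) ≤ q̃*_ω(𝒢)`. -/
theorem qTildeStar_window_c_approximation {V : Type*} [Fintype V]
    (T : ℕ) (hT : 1 ≤ T) (G : ℕ → SimpleGraph V)
    (hE : ∀ t ∈ Icc 1 T, (G t).edgeSet.Nonempty)
    (ω : ℝ) (hω : 0 ≤ ω) (c d : ℕ) (hc : 2 ≤ c) (hd : 1 ≤ d) :
    ∃ (ℓ : ℕ) (t : ℕ → ℕ), 1 ≤ ℓ ∧ t 0 = 0 ∧ t ℓ = T ∧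
      (∀ i < ℓ, t i < t (i + 1) ∧ t (i + 1) - t i ≤ 2 * d) ∧
      (1 - (1 / (c : ℝ) + 2 / (d : ℝ))) * qTildeStar G T ω ≤
        ∑ i ∈ Finset.range ℓ, qTildeStarKI G (t i + 1) (t (i + 1)) ω c ∧
      ∑ i ∈ Finset.range ℓ, qTildeStarKI G (t i + 1) (t (i + 1)) ω c ≤
        qTildeStar G T ω :=
  qTildeStar_window_c_approximation_general T hT G ω hω c d hc hd

end TemporalModularity
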